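/- arXiv:math/0612468 — 2 statements merged into one kernel-verified Lean document; each statement's English description precedes it below -/
import Mathlib

section
/- Let β = (y,v) ∈ 𝓟. (a) If x ∈ P with x ≠ y and v ∉ x^⊥, then d(x, β) = 3 in 𝕊. (b) If u' ∈ P' with u ≠ v and u ∉ y^⊥, then d(u', β) = 3 in 𝕊. -/
/- Common setup: the generalized quadrangle of order (2,2) on the edges of a
   6-element set, the near hexagon 𝓢 = ℍ₃, and the near hexagon 𝕊 = DSp(6,2). -/

/-- An edge: a 2-element subset of `Fin 6`. -/
abbrev Edge : Type := {e : Finset (Fin 6) // e.card = 2}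

/-- `perp A` is `A^⊥`: the set of edges equal to or disjoint from every element of `A`. -/
def perp (A : Set Edge) : Set Edge := {y | ∀ x ∈ A, x = y ∨ Disjoint x.1 y.1}

/-- A factor: a set of three pairwise disjoint edges (a perfect matching of `Fin 6`). -/
def IsFactor (T : Set Edge) : Prop :=
  T.ncard = 3 ∧ T.Pairwise (fun x y => Disjoint x.1 y.1)

/-- A triad: a set of three pairwise non-collinear (i.e. pairwise intersecting) distinct
    edges. -/
def IsTriad (T : Set Edge) : Prop :=
  T.ncard = 3 ∧ T.Pairwise (fun x y => ¬ Disjoint x.1 y.1)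

/-- A complete triad: a triad not contained in a set of four pairwise non-collinear edges. -/
def IsCompleteTriad (T : Set Edge) : Prop :=
  IsTriad T ∧
    ¬ ∃ U : Set Edge, T ⊆ U ∧ U.ncard = 4 ∧ U.Pairwise (fun x y => ¬ Disjoint x.1 y.1)

/-- The point set 𝓟 of 𝓢 : pairs `(x,u)` of edges with `x = u` or `x ∩ u = ∅`. -/
def NPoint : Type := {p : Edge × Edge // p.1 = p.2 ∨ Disjoint p.1.1 p.2.1}

/-- The lines 𝓛 of 𝓢 : sets `{(x, σ x) : x ∈ T}` where `T` is a factor or a complete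
    triad and `σ : T → T^⊥` is a bijection. -/
def IsLine (L : Set NPoint) : Prop :=
  ∃ (T : Set Edge) (σ : Edge → Edge),
    (IsFactor T ∨ IsCompleteTriad T) ∧ Set.BijOn σ T (perp T) ∧
    L = {p : NPoint | p.1.1 ∈ T ∧ p.1.2 = σ p.1.1}

/-- The collinearity graph of 𝓢. -/
def NG : SimpleGraph NPoint where
  Adj α β := α ≠ β ∧ ∃ L, IsLine L ∧ α ∈ L ∧ β ∈ L
  symm := ⟨fun _ _ ⟨h, L, hL, ha, hb⟩ => ⟨h.symm, L, hL, hb, ha⟩⟩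
  loopless := ⟨fun _ h => h.1 rfl⟩

/-- The point set ℙ of 𝕊 : the disjoint union 𝓟 ⊔ P ⊔ P' where `P` and `P'` are two
    copies of the edge set. -/
def BPoint : Type := NPoint ⊕ Edge ⊕ Edge

/-- Embedding of 𝓟 into ℙ. -/
def inS (p : NPoint) : BPoint := Sum.inl p

/-- Embedding of the first copy `P` of the edge set into ℙ (an edge `x` gives `x ∈ P`). -/
def inP (x : Edge) : BPoint := Sum.inr (Sum.inl x)

/-- Embedding of the second copy `P'` of the edge set into ℙ (an edge `u` gives `u' ∈ P'`). -/
def inP' (u : Edge) : BPoint := Sum.inr (Sum.inr u)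

/-- The lines 𝕃 of 𝕊 : the lines of 𝓛 together with the lines `{x, (x,u), u'}`
    for `(x,u) ∈ 𝓟` (the latter being the lines of type `𝕃₁`). -/
def IsBLine (L : Set BPoint) : Prop :=
  (∃ L₀ : Set NPoint, IsLine L₀ ∧ L = inS '' L₀) ∨
  (∃ p : NPoint, L = {inP p.1.1, inS p, inP' p.1.2})

/-- The collinearity graph of 𝕊. -/
def BG : SimpleGraph BPoint where
  Adj α β := α ≠ β ∧ ∃ L, IsBLine L ∧ α ∈ L ∧ β ∈ L
  symm := ⟨fun _ _ ⟨h, L, hL, ha, hb⟩ => ⟨h.symm, L, hL, hb, ha⟩⟩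
  loopless := ⟨fun _ h => h.1 rfl⟩

/-! Write `β = (y, v)`. The edges `y` and `v` lie in a common factor `T`, and the transposition
`σ = (y v)` permutes `T`, so `{(e, σ e) : e ∈ T}` is a line of `𝓢` through `β`. In (a) the edge
`x` meets `v`; having only two points, it misses some `f ∈ T \ {v}`, and
`x, f', (σ f, f), β` is a path of length 3. There is no shorter path: the neighbours of `x` in
`𝕊` are the points `(x, u)` and `u'` with `u ∈ x^⊥`, whereas every point `(x, u)` collinear with
`β` in `𝓢`, and the only neighbour `v'` of `β` in `P'`, would force `v ∈ x^⊥`. Part (b) is the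
same argument with the roles of the two coordinates exchanged. -/

open Set

lemma mem_perp_singleton {x e : Edge} : e ∈ perp {x} ↔ x = e ∨ Disjoint x.1 e.1 := by
  simp [perp]

lemma NPoint.snd_mem_perp_fst (p : NPoint) : p.1.2 ∈ perp {p.1.1} :=
  mem_perp_singleton.mpr p.2

lemma Edge.ne_of_disjoint {a b : Edge} (h : Disjoint a.1 b.1) : a ≠ b := by
  rintro rfl
  simpa [disjoint_self.mp h] using a.2

lemma exists_edge_disjoint {s : Finset (Fin 6)} (hs : s.card ≤ 4) : ∃ e : Edge, Disjoint s e.1 := by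
  obtain ⟨t, hts, ht⟩ := Finset.exists_subset_card_eq (s := sᶜ) (n := 2)
    (by rw [Finset.card_compl, Fintype.card_fin]; omega)
  exact ⟨⟨t, ht⟩, Finset.disjoint_of_subset_right hts disjoint_compl_right⟩

/-- An edge has two points, so it cannot meet three pairwise disjoint edges. -/
lemma exists_mem_isFactor_disjoint {T : Set Edge} (hT : IsFactor T) {a x : Edge} (ha : a ∈ T)
    (hx : ¬Disjoint x.1 a.1) : ∃ e ∈ T, e ≠ a ∧ Disjoint x.1 e.1 := by
  obtain ⟨b, c, hbc, hTa⟩ := ncard_eq_two.mp <| by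
    rw [ncard_sdiff_singleton_of_mem ha, hT.1]
  have hb : b ∈ T \ {a} := hTa ▸ mem_insert b {c}
  have hc : c ∈ T \ {a} := hTa ▸ mem_insert_of_mem b rfl
  by_contra! hmeet
  have hxb := hmeet b hb.1 hb.2
  have hxc := hmeet c hc.1 hc.2
  obtain ⟨p, hp⟩ := Finset.not_disjoint_iff_nonempty_inter.mp hx
  obtain ⟨q, hq⟩ := Finset.not_disjoint_iff_nonempty_inter.mp hxb
  obtain ⟨r, hr⟩ := Finset.not_disjoint_iff_nonempty_inter.mp hxc
  rw [Finset.mem_inter] at hp hq hr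
  have hab := hT.2 ha hb.1 (Ne.symm hb.2)
  have hac := hT.2 ha hc.1 (Ne.symm hc.2)
  have hbc' := hT.2 hb.1 hc.1 hbc
  have hsub : ({p, q, r} : Finset (Fin 6)) ⊆ x.1 := by
    simp [Finset.insert_subset_iff, hp.1, hq.1, hr.1]
  have hcard : ({p, q, r} : Finset (Fin 6)).card = 3 := by
    rw [Finset.card_eq_three]
    exact ⟨p, q, r, hab.forall_ne_finset hp.2 hq.2, hac.forall_ne_finset hp.2 hr.2,
      hbc'.forall_ne_finset hq.2 hr.2, rfl⟩
  have := Finset.card_le_card hsub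
  rw [hcard, x.2] at this
  omega

lemma isFactor_triple {a b c : Edge} (hab : Disjoint a.1 b.1) (hac : Disjoint a.1 c.1)
    (hbc : Disjoint b.1 c.1) : IsFactor {a, b, c} :=
  ⟨ncard_eq_three.mpr ⟨a, b, c, Edge.ne_of_disjoint hab, Edge.ne_of_disjoint hac,
      Edge.ne_of_disjoint hbc, rfl⟩,
    by simp [Set.pairwise_insert, hab, hac, hbc, hab.symm, hac.symm, hbc.symm]⟩

lemma NPoint.exists_isFactor (β : NPoint) : ∃ T, IsFactor T ∧ β.1.1 ∈ T ∧ β.1.2 ∈ T := by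
  obtain ⟨⟨y, v⟩, hyv⟩ := β
  suffices ∃ w : Edge, Disjoint y.1 w.1 ∧ v ∈ ({y, w} : Set Edge) by
    obtain ⟨w, hyw, hv⟩ := this
    obtain ⟨c, hc⟩ := exists_edge_disjoint (s := y.1 ∪ w.1)
      ((Finset.card_union_le _ _).trans (by rw [y.2, w.2]))
    rw [Finset.disjoint_union_left] at hc
    refine ⟨{y, w, c}, isFactor_triple hyw hc.1 hc.2, mem_insert y _, ?_⟩
    rcases hv with rfl | rfl
    exacts [mem_insert _ _, mem_insert_of_mem _ (mem_insert _ _)]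
  rcases hyv with (rfl : y = v) | hyv
  · obtain ⟨w, hw⟩ := exists_edge_disjoint (s := y.1) (by rw [y.2]; omega)
    exact ⟨w, hw, mem_insert _ _⟩
  · exact ⟨v, hyv, mem_insert_of_mem _ rfl⟩

lemma IsFactor.perp_eq {T : Set Edge} (hT : IsFactor T) : perp T = T := by
  ext e
  refine ⟨fun he => ?_, fun he x hx => (eq_or_ne x e).imp_right (hT.2 hx he)⟩
  by_contra heT
  have hdisj : ∀ x ∈ T, Disjoint x.1 e.1 := fun x hx =>
    (he x hx).resolve_left fun h => heT (h ▸ hx)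
  obtain ⟨a, b, c, hab, hac, hbc, rfl⟩ := ncard_eq_three.mp hT.1
  have habd : Disjoint a.1 b.1 := hT.2 (by simp) (by simp) hab
  have hacd : Disjoint a.1 c.1 := hT.2 (by simp) (by simp) hac
  have hbcd : Disjoint b.1 c.1 := hT.2 (by simp) (by simp) hbc
  have hcard : (a.1 ∪ b.1 ∪ c.1 ∪ e.1).card = 8 := by
    rw [Finset.card_union_of_disjoint, Finset.card_union_of_disjoint,
      Finset.card_union_of_disjoint habd, a.2, b.2, c.2, e.2]
    · exact Finset.disjoint_union_left.mpr ⟨hacd, hbcd⟩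
    · simp only [Finset.disjoint_union_left]
      exact ⟨⟨hdisj a (by simp), hdisj b (by simp)⟩, hdisj c (by simp)⟩
  have := Finset.card_le_univ (a.1 ∪ b.1 ∪ c.1 ∪ e.1)
  rw [hcard, Fintype.card_fin] at this
  omega

lemma NPoint.adj_of_isFactor {T : Set Edge} (hT : IsFactor T) {σ : Equiv.Perm Edge}
    (hσ : MapsTo σ T T) {p q : NPoint} (hp : p.1.1 ∈ T) (hpσ : p.1.2 = σ p.1.1) (hq : q.1.1 ∈ T)
    (hqσ : q.1.2 = σ q.1.1) (hpq : p.1.1 ≠ q.1.1) : NG.Adj p q := by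
  have hbij : BijOn σ T (perp T) := by
    rw [hT.perp_eq, ← T.toFinite.injOn_iff_bijOn_of_mapsTo hσ]
    exact σ.injective.injOn
  exact ⟨fun h => hpq (h ▸ rfl), _, ⟨T, σ, Or.inl hT, hbij, rfl⟩, ⟨hp, hpσ⟩, ⟨hq, hqσ⟩⟩

lemma NPoint.snd_mem_perp_fst_of_adj {p q : NPoint} (h : NG.Adj p q) : p.1.2 ∈ perp {q.1.1} := by
  obtain ⟨-, L, ⟨T, σ, -, hσ, rfl⟩, ⟨hp, hpσ⟩, ⟨hq, -⟩⟩ := h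
  exact mem_perp_singleton.mpr (hpσ ▸ hσ.mapsTo hp q.1.1 hq)

def line₁ (p : NPoint) : Set BPoint := {inP p.1.1, inS p, inP' p.1.2}

lemma inP_mem_line₁ {x : Edge} {p : NPoint} : inP x ∈ line₁ p ↔ p.1.1 = x := by
  refine ⟨?_, fun h => h ▸ mem_insert _ _⟩
  rintro (h | h | h) <;> cases h
  rfl

lemma inS_mem_line₁ {q p : NPoint} : inS q ∈ line₁ p ↔ q = p := by
  refine ⟨?_, fun h => h ▸ mem_insert_of_mem _ (mem_insert _ _)⟩
  rintro (h | h | h) <;> cases h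
  rfl

lemma inP'_mem_line₁ {u : Edge} {p : NPoint} : inP' u ∈ line₁ p ↔ p.1.2 = u := by
  refine ⟨?_, fun h => h ▸ mem_insert_of_mem _ (mem_insert_of_mem _ rfl)⟩
  rintro (h | h | h) <;> cases h
  rfl

lemma IsBLine.exists_eq_line₁_of_inP_mem {L : Set BPoint} (hL : IsBLine L) {x : Edge}
    (hx : inP x ∈ L) : ∃ p : NPoint, p.1.1 = x ∧ L = line₁ p := by
  rcases hL with ⟨L₀, -, rfl⟩ | ⟨p, rfl⟩
  · obtain ⟨_, -, h⟩ := hx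
    cases h
  · exact ⟨p, inP_mem_line₁.mp hx, rfl⟩

lemma IsBLine.exists_eq_line₁_of_inP'_mem {L : Set BPoint} (hL : IsBLine L) {u : Edge}
    (hu : inP' u ∈ L) : ∃ p : NPoint, p.1.2 = u ∧ L = line₁ p := by
  rcases hL with ⟨L₀, -, rfl⟩ | ⟨p, rfl⟩
  · obtain ⟨_, -, h⟩ := hu
    cases h
  · exact ⟨p, inP'_mem_line₁.mp hu, rfl⟩

lemma BPoint.adj_of_mem_line₁ {p : NPoint} {α β : BPoint} (hne : α ≠ β) (hα : α ∈ line₁ p)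
    (hβ : β ∈ line₁ p) : BG.Adj α β :=
  ⟨hne, line₁ p, Or.inr ⟨p, rfl⟩, hα, hβ⟩

lemma BPoint.adj_inS_iff {p q : NPoint} : BG.Adj (inS p) (inS q) ↔ NG.Adj p q := by
  constructor
  · rintro ⟨hne, L, ⟨L₀, hL₀, rfl⟩ | ⟨r, rfl⟩, hp, hq⟩
    · obtain ⟨p', hp', hpp'⟩ := hp
      obtain ⟨q', hq', hqq'⟩ := hq
      cases hpp'
      cases hqq'
      exact ⟨fun h => hne (h ▸ rfl), L₀, hL₀, hp', hq'⟩
    · change inS p ∈ line₁ r at hp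
      change inS q ∈ line₁ r at hq
      exact absurd (congrArg inS ((inS_mem_line₁.mp hp).trans (inS_mem_line₁.mp hq).symm)) hne
  · rintro ⟨hne, L, hL, hp, hq⟩
    exact ⟨fun h => hne (Sum.inl_injective h), inS '' L, Or.inl ⟨L, hL, rfl⟩,
      mem_image_of_mem _ hp, mem_image_of_mem _ hq⟩

lemma BPoint.adj_inP_inS_iff {x : Edge} {p : NPoint} : BG.Adj (inP x) (inS p) ↔ p.1.1 = x := by
  constructor
  · rintro ⟨-, L, hL, hx, hp⟩
    obtain ⟨q, rfl, rfl⟩ := hL.exists_eq_line₁_of_inP_mem hx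
    rw [inS_mem_line₁.mp hp]
  · rintro rfl
    exact BPoint.adj_of_mem_line₁ (fun h => by cases h) (inP_mem_line₁.mpr rfl)
      (inS_mem_line₁.mpr rfl)

lemma BPoint.adj_inP'_inS_iff {u : Edge} {p : NPoint} : BG.Adj (inP' u) (inS p) ↔ p.1.2 = u := by
  constructor
  · rintro ⟨-, L, hL, hu, hp⟩
    obtain ⟨q, rfl, rfl⟩ := hL.exists_eq_line₁_of_inP'_mem hu
    rw [inS_mem_line₁.mp hp]
  · rintro rfl
    exact BPoint.adj_of_mem_line₁ (fun h => by cases h) (inP'_mem_line₁.mpr rfl)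
      (inS_mem_line₁.mpr rfl)

lemma BPoint.adj_inP_inP'_iff {x u : Edge} : BG.Adj (inP x) (inP' u) ↔ u ∈ perp {x} := by
  constructor
  · rintro ⟨-, L, hL, hx, hu⟩
    obtain ⟨q, rfl, rfl⟩ := hL.exists_eq_line₁_of_inP_mem hx
    exact inP'_mem_line₁.mp hu ▸ q.snd_mem_perp_fst
  · intro hu
    exact BPoint.adj_of_mem_line₁ (p := ⟨(x, u), mem_perp_singleton.mp hu⟩) (fun h => by cases h)
      (inP_mem_line₁.mpr rfl) (inP'_mem_line₁.mpr rfl)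

lemma BPoint.not_adj_inP_inP {x e : Edge} : ¬BG.Adj (inP x) (inP e) := by
  rintro ⟨hne, L, hL, hx, he⟩
  obtain ⟨q, rfl, rfl⟩ := hL.exists_eq_line₁_of_inP_mem hx
  exact hne (inP_mem_line₁.mp he ▸ rfl)

lemma BPoint.not_adj_inP'_inP' {u e : Edge} : ¬BG.Adj (inP' u) (inP' e) := by
  rintro ⟨hne, L, hL, hu, he⟩
  obtain ⟨q, rfl, rfl⟩ := hL.exists_eq_line₁_of_inP'_mem hu
  exact hne (inP'_mem_line₁.mp he ▸ rfl)

lemma SimpleGraph.dist_eq_three {V : Type*} {G : SimpleGraph V} {a b c d : V} (hab : a ≠ b)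
    (hnadj : ¬G.Adj a b) (hcommon : ∀ z, G.Adj a z → ¬G.Adj z b) (hac : G.Adj a c)
    (hcd : G.Adj c d) (hdb : G.Adj d b) : G.dist a b = 3 := by
  have hle : G.edist a b ≤ 3 := G.edist_le (.cons hac (.cons hcd (.cons hdb .nil)))
  have hlt : 2 < G.edist a b := two_lt_edist_iff.mpr ⟨hab, hnadj,
    eq_empty_of_forall_notMem fun z hz =>
      hcommon z (G.mem_commonNeighbors.mp hz).1 (G.mem_commonNeighbors.mp hz).2.symm⟩
  have : G.edist a b = 3 := le_antisymm hle (Order.add_one_le_of_lt hlt)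
  simp [SimpleGraph.dist, this]

lemma Equiv.mapsTo_swap {α : Type*} [DecidableEq α] {s : Set α} {a b : α} (ha : a ∈ s)
    (hb : b ∈ s) : MapsTo (Equiv.swap a b) s s := fun x hx => by
  rw [Equiv.swap_apply_def]
  split_ifs <;> assumption

/-- `β = (y, σ y)` for the transposition `σ = (y v)`, which permutes `T`; so the points
`(e, σ e)`, `e ∈ T`, form a line through `β`. -/
lemma NPoint.exists_adj_of_isFactor (β : NPoint) {T : Set Edge} (hT : IsFactor T) (hy : β.1.1 ∈ T)
    (hv : β.1.2 ∈ T) {e : Edge} (he : e ∈ T) (hey : e ≠ β.1.1) :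
    ∃ m : NPoint, m.1.1 = e ∧ m.1.2 = Equiv.swap β.1.1 β.1.2 e ∧ NG.Adj m β := by
  set σ := Equiv.swap β.1.1 β.1.2
  have hσ : MapsTo σ T T := Equiv.mapsTo_swap hy hv
  refine ⟨⟨(e, σ e), (eq_or_ne e (σ e)).imp_right (hT.2 he (hσ he))⟩, rfl, rfl, ?_⟩
  exact NPoint.adj_of_isFactor hT hσ he rfl hy (Equiv.swap_apply_left _ _).symm hey

lemma NPoint.exists_adj_snd_eq (β : NPoint) {T : Set Edge} (hT : IsFactor T) (hy : β.1.1 ∈ T)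
    (hv : β.1.2 ∈ T) {f : Edge} (hf : f ∈ T) (hfv : f ≠ β.1.2) :
    ∃ m : NPoint, m.1.2 = f ∧ NG.Adj m β := by
  have hne : Equiv.swap β.1.1 β.1.2 f ≠ β.1.1 := by
    rwa [Ne, Equiv.swap_apply_eq_iff, Equiv.swap_apply_left]
  obtain ⟨m, -, hm, hmβ⟩ := β.exists_adj_of_isFactor hT hy hv (Equiv.mapsTo_swap hy hv hf) hne
  exact ⟨m, hm.trans (Equiv.swap_apply_self _ _ _), hmβ⟩

lemma BPoint.dist_inP_inS_eq_three (β : NPoint) {x : Edge} (hxy : x ≠ β.1.1)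
    (hv : β.1.2 ∉ perp {x}) : BG.dist (inP x) (inS β) = 3 := by
  obtain ⟨T, hT, hy, hvT⟩ := β.exists_isFactor
  obtain ⟨f, hfT, hfv, hxf⟩ :=
    exists_mem_isFactor_disjoint hT hvT fun h => hv (mem_perp_singleton.mpr (Or.inr h))
  obtain ⟨m, rfl, hmβ⟩ := β.exists_adj_snd_eq hT hy hvT hfT hfv
  have hcommon : ∀ z, BG.Adj (inP x) z → ¬BG.Adj z (inS β) := by
    rintro (p | e | e) hxz hzβ
    · exact hv <| BPoint.adj_inP_inS_iff.mp hxz ▸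
        NPoint.snd_mem_perp_fst_of_adj (BPoint.adj_inS_iff.mp hzβ).symm
    · exact BPoint.not_adj_inP_inP hxz
    · exact hv (BPoint.adj_inP'_inS_iff.mp hzβ ▸ BPoint.adj_inP_inP'_iff.mp hxz)
  exact SimpleGraph.dist_eq_three (fun h => by cases h)
    (fun h => hxy (BPoint.adj_inP_inS_iff.mp h).symm) hcommon
    (BPoint.adj_inP_inP'_iff.mpr (mem_perp_singleton.mpr (Or.inr hxf)))
    (BPoint.adj_inP'_inS_iff.mpr rfl) (BPoint.adj_inS_iff.mpr hmβ)

lemma BPoint.dist_inP'_inS_eq_three (β : NPoint) {u : Edge} (huv : u ≠ β.1.2)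
    (hu : u ∉ perp {β.1.1}) : BG.dist (inP' u) (inS β) = 3 := by
  obtain ⟨T, hT, hy, hv⟩ := β.exists_isFactor
  obtain ⟨e, heT, hey, hue⟩ :=
    exists_mem_isFactor_disjoint hT hy fun h => hu (mem_perp_singleton.mpr (Or.inr h.symm))
  obtain ⟨m, rfl, -, hmβ⟩ := β.exists_adj_of_isFactor hT hy hv heT hey
  have hcommon : ∀ z, BG.Adj (inP' u) z → ¬BG.Adj z (inS β) := by
    rintro (p | e | e) huz hzβ
    · exact hu <| BPoint.adj_inP'_inS_iff.mp huz ▸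
        NPoint.snd_mem_perp_fst_of_adj (BPoint.adj_inS_iff.mp hzβ)
    · exact hu (BPoint.adj_inP_inS_iff.mp hzβ ▸ BPoint.adj_inP_inP'_iff.mp huz.symm)
    · exact BPoint.not_adj_inP'_inP' huz
  exact SimpleGraph.dist_eq_three (fun h => by cases h)
    (fun h => huv (BPoint.adj_inP'_inS_iff.mp h).symm) hcommon
    (BPoint.adj_inP_inP'_iff.mpr (mem_perp_singleton.mpr (Or.inr hue.symm))).symm
    (BPoint.adj_inP_inS_iff.mpr rfl) (BPoint.adj_inS_iff.mpr hmβ)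

/-- Let `β = (y,v) ∈ 𝓟`. (a) If `x ∈ P` with `x ≠ y` and `v ∉ x^⊥`, then
`d(x,β) = 3` in 𝕊. (b) If `u' ∈ P'` with `u ≠ v` and `u ∉ y^⊥`, then `d(u',β) = 3` in 𝕊. -/
theorem statement13 (β : NPoint) :
    (∀ x : Edge, x ≠ β.1.1 → β.1.2 ∉ perp {x} →
      BG.dist (inP x) (inS β) = 3) ∧
    (∀ u : Edge, u ≠ β.1.2 → u ∉ perp {β.1.1} →
      BG.dist (inP' u) (inS β) = 3) :=
  ⟨fun _ => BPoint.dist_inP_inS_eq_three β, fun _ => BPoint.dist_inP'_inS_eq_three β⟩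
end

section
/- The collinearity graph of 𝕊 is connected and has diameter 3. -/
/-!
A point `x ∈ P` and a point `u' ∈ P'` are collinear iff `u ∈ x^⊥`, via the line
`{x, (x,u), u'}`, and these are the only lines through points of `P ∪ P'`. Since any two edges
have a common element in their perps, every pair of points involving `P ∪ P'` is at distance at
most 3, and so is a pair `(x,u), (y,v)` of `𝓟` unless `v ∉ x^⊥` and `u ∉ y^⊥`. In that case the
two points have a common neighbour `(z,w)` in `𝓢`: two distinct edges `x, z` span a factor or a
complete triad `T` with `T^⊥ = {x,z}^⊥`, a set of size 3, so any two distinct `u, w ∈ {x,z}^⊥`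
are values of a bijection `T → T^⊥`. Conversely, if `u ∉ x^⊥` then `x` and `u'` are neither
collinear nor have a common neighbour, so the diameter is exactly 3.
-/

theorem Set.exists_eq_insert_insert_of_ncard_eq_three {α : Type*} {s : Set α} (hs : s.ncard = 3)
    {a b : α} (ha : a ∈ s) (hb : b ∈ s) (hab : a ≠ b) :
    ∃ c, a ≠ c ∧ b ≠ c ∧ s = {a, b, c} := by
  have hsub : ({a, b} : Set α) ⊆ s := Set.insert_subset ha (Set.singleton_subset_iff.2 hb)
  have hrest : (s \ {a, b}).ncard = 1 := by
    rw [Set.ncard_sdiff hsub, hs, Set.ncard_pair hab]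
  obtain ⟨c, hc⟩ := Set.ncard_eq_one.1 hrest
  have hcs : c ∈ s \ {a, b} := hc ▸ rfl
  simp only [Set.mem_sdiff, Set.mem_insert_iff, Set.mem_singleton_iff, not_or] at hcs
  refine ⟨c, Ne.symm hcs.2.1, Ne.symm hcs.2.2, ?_⟩
  rw [← Set.union_sdiff_cancel hsub, hc]
  ext; simp only [Set.mem_union, Set.mem_insert_iff, Set.mem_singleton_iff]; tauto

theorem exists_bijOn_three {α β : Type*} [DecidableEq α] {a b c : α} (hab : a ≠ b) (hac : a ≠ c)
    (hbc : b ≠ c) {t : Set β} (ht : t.ncard = 3) {u w : β} (hu : u ∈ t) (hw : w ∈ t)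
    (huw : u ≠ w) : ∃ σ : α → β, Set.BijOn σ {a, b, c} t ∧ σ a = u ∧ σ b = w := by
  obtain ⟨r, hur, hwr, rfl⟩ := Set.exists_eq_insert_insert_of_ncard_eq_three ht hu hw huw
  set σ : α → β := fun e => if e = a then u else if e = b then w else r
  have hσ : σ '' {a, b, c} = {u, w, r} := by
    simp [σ, Set.image_insert_eq, hab.symm, hac.symm, hbc.symm]
  refine ⟨σ, hσ ▸ Set.InjOn.bijOn_image ?_, by simp [σ], by simp [σ, hab.symm]⟩
  rintro e (rfl | rfl | rfl) f (rfl | rfl | rfl) h <;>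
    simp_all [σ, hab.symm, hac.symm, hbc.symm, Ne.symm hur, Ne.symm hwr]

theorem SimpleGraph.edist_le_three {V : Type*} {G : SimpleGraph V} {a b c d : V}
    (hab : G.Adj a b ∨ a = b) (hbc : G.Adj b c ∨ b = c) (hcd : G.Adj c d ∨ c = d) :
    G.edist a d ≤ 3 := by
  rw [← edist_le_one_iff_adj_or_eq] at hab hbc hcd
  calc G.edist a d ≤ G.edist a b + G.edist b c + G.edist c d :=
        G.edist_triangle.trans (add_le_add_left G.edist_triangle _)
    _ ≤ 1 + 1 + 1 := by gcongr
    _ = 3 := by norm_num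

/-- `Compat x u` says that `u ∈ x^⊥`. -/
def Compat (x u : Edge) : Prop := x = u ∨ Disjoint x.1 u.1

instance : DecidableRel Compat := fun _ _ => inferInstanceAs (Decidable (_ ∨ _))

theorem Compat.refl (x : Edge) : Compat x x := Or.inl rfl

theorem Compat.symm {x u : Edge} (h : Compat x u) : Compat u x :=
  h.imp Eq.symm fun h => h.symm

theorem mem_perp_pair {x z y : Edge} : y ∈ perp {x, z} ↔ Compat x y ∧ Compat z y := by
  simp [perp, Compat]

theorem mem_perp_triple {x z c y : Edge} :
    y ∈ perp {x, z, c} ↔ Compat x y ∧ Compat z y ∧ Compat c y := by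
  simp [perp, Compat]

theorem exists_compat_compat (x y : Edge) : ∃ z, Compat x z ∧ Compat z y := by
  revert x y; decide

theorem exists_compat_mem_perp_pair {x y : Edge} (hxy : x ≠ y) (z : Edge) :
    ∃ w ∈ perp {x, y}, Compat z w := by
  have key : ∀ x y z : Edge, x ≠ y → ∃ w, Compat x w ∧ Compat y w ∧ Compat z w := by decide
  obtain ⟨w, hxw, hyw, hzw⟩ := key x y z hxy
  exact ⟨w, mem_perp_pair.2 ⟨hxw, hyw⟩, hzw⟩

theorem ncard_perp_pair {x z : Edge} (hxz : x ≠ z) : (perp {x, z}).ncard = 3 := by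
  have key : ∀ x z : Edge, x ≠ z →
      (Finset.univ.filter fun y => Compat x y ∧ Compat z y).card = 3 := by decide
  rw [← key x z hxz, ← Set.ncard_coe_finset]
  congr 1
  ext y
  simp [mem_perp_pair]

set_option synthInstance.maxSize 2000 in
/-- The third edge `c` is the complement of `x ∪ z` when `x, z` are disjoint, and the
symmetric difference `x ∆ z` otherwise. -/
theorem exists_third_edge {x z : Edge} (hxz : x ≠ z) : ∃ c : Edge, c ≠ x ∧ c ≠ z ∧
    ((Disjoint x.1 z.1 ∧ Disjoint x.1 c.1 ∧ Disjoint z.1 c.1) ∨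
      (¬ Disjoint x.1 z.1 ∧ ¬ Disjoint x.1 c.1 ∧ ¬ Disjoint z.1 c.1 ∧
        ∀ g : Edge, g ≠ x → g ≠ z → g ≠ c →
          Disjoint x.1 g.1 ∨ Disjoint z.1 g.1 ∨ Disjoint c.1 g.1)) ∧
    ∀ y, Compat x y → Compat z y → Compat c y := by
  revert x z; decide

theorem isCompleteTriad_of_forall_disjoint {T : Set Edge} (hT : IsTriad T)
    (h : ∀ g ∉ T, ∃ t ∈ T, Disjoint t.1 g.1) : IsCompleteTriad T := by
  refine ⟨hT, fun ⟨U, hTU, hU, hUpw⟩ => ?_⟩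
  obtain ⟨g, hgU, hgT⟩ := Set.exists_of_ssubset
    (hTU.ssubset_of_ne fun hTU => by simp [← hTU, hT.1] at hU)
  obtain ⟨t, htT, htg⟩ := h g hgT
  exact hUpw (hTU htT) hgU (fun h => hgT (h ▸ htT)) htg

theorem exists_factor_or_completeTriad {x z : Edge} (hxz : x ≠ z) :
    ∃ c : Edge, (IsFactor {x, z, c} ∨ IsCompleteTriad {x, z, c}) ∧
      x ≠ c ∧ z ≠ c ∧ perp {x, z, c} = perp {x, z} := by
  obtain ⟨c, hcx, hcz, htype, hc⟩ := exists_third_edge hxz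
  have hcard : ({x, z, c} : Set Edge).ncard = 3 :=
    Set.ncard_eq_three.2 ⟨x, z, c, hxz, Ne.symm hcx, Ne.symm hcz, rfl⟩
  refine ⟨c, ?_, Ne.symm hcx, Ne.symm hcz, ?_⟩
  · rcases htype with ⟨hxz', hxc, hzc⟩ | ⟨hxz', hxc, hzc, hcomplete⟩
    · refine Or.inl ⟨hcard, ?_⟩
      simp [Set.pairwise_insert, hxz', hxc, hzc, hxz'.symm, hxc.symm, hzc.symm]
    · refine Or.inr (isCompleteTriad_of_forall_disjoint ⟨hcard, ?_⟩ ?_)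
      · simp [Set.pairwise_insert, hxz', hxc, hzc, disjoint_comm]
      · intro g hg
        simp only [Set.mem_insert_iff, Set.mem_singleton_iff, not_or] at hg
        simpa using hcomplete g hg.1 hg.2.1 hg.2.2
  · ext y
    rw [mem_perp_triple, mem_perp_pair]
    exact ⟨fun h => ⟨h.1, h.2.1⟩, fun h => ⟨h.1, h.2, hc y h.1 h.2⟩⟩

theorem NG.adj_mk {x z u w : Edge} (hxz : x ≠ z) (huw : u ≠ w) (hxu : Compat x u)
    (hzu : Compat z u) (hxw : Compat x w) (hzw : Compat z w) :
    NG.Adj ⟨(x, u), hxu⟩ ⟨(z, w), hzw⟩ := by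
  obtain ⟨c, hT, hxc, hzc, hperp⟩ := exists_factor_or_completeTriad hxz
  obtain ⟨σ, hσ, hσx, hσz⟩ := exists_bijOn_three hxz hxc hzc (hperp ▸ ncard_perp_pair hxz)
    (hperp ▸ mem_perp_pair.2 ⟨hxu, hzu⟩) (hperp ▸ mem_perp_pair.2 ⟨hxw, hzw⟩) huw
  refine ⟨fun h => hxz (congrArg (fun p : NPoint => p.1.1) h), _, ⟨_, σ, hT, hσ, rfl⟩, ?_, ?_⟩
  · exact ⟨by simp, hσx.symm⟩
  · exact ⟨by simp, hσz.symm⟩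

/-- The common neighbour is `(z,w)` with `z ∈ {u,v}^⊥` and `w ∈ {x,y}^⊥ ∩ z^⊥`. -/
theorem NG.exists_adj_adj {x y u v : Edge} (hxu : Compat x u) (hyv : Compat y v)
    (hxv : ¬ Compat x v) (hyu : ¬ Compat y u) :
    ∃ r, NG.Adj ⟨(x, u), hxu⟩ r ∧ NG.Adj r ⟨(y, v), hyv⟩ := by
  have hxy : x ≠ y := by rintro rfl; exact hxv hyv
  obtain ⟨z, huz, hzv⟩ := exists_compat_compat u v
  obtain ⟨w, hw, hzw⟩ := exists_compat_mem_perp_pair hxy z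
  obtain ⟨hxw, hyw⟩ := mem_perp_pair.1 hw
  refine ⟨⟨(z, w), hzw⟩, NG.adj_mk ?_ ?_ hxu huz.symm hxw hzw,
    NG.adj_mk ?_ ?_ hzw hyw hzv hyv⟩
  · rintro rfl; exact hxv hzv
  · rintro rfl; exact hyu hyw
  · rintro rfl; exact hyu huz.symm
  · rintro rfl; exact hxv hxw

@[simp] theorem inS_inj {p q : NPoint} : inS p = inS q ↔ p = q := Sum.inl_injective.eq_iff
@[simp] theorem inP_inj {x y : Edge} : inP x = inP y ↔ x = y :=
  (Sum.inr_injective.comp Sum.inl_injective).eq_iff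
@[simp] theorem inP'_inj {x y : Edge} : inP' x = inP' y ↔ x = y :=
  (Sum.inr_injective.comp Sum.inr_injective).eq_iff
@[simp] theorem inS_ne_inP (p : NPoint) (x : Edge) : inS p ≠ inP x := nofun
@[simp] theorem inP_ne_inS (x : Edge) (p : NPoint) : inP x ≠ inS p := nofun
@[simp] theorem inS_ne_inP' (p : NPoint) (u : Edge) : inS p ≠ inP' u := nofun
@[simp] theorem inP'_ne_inS (u : Edge) (p : NPoint) : inP' u ≠ inS p := nofun
@[simp] theorem inP_ne_inP' (x u : Edge) : inP x ≠ inP' u := nofun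
@[simp] theorem inP'_ne_inP (u x : Edge) : inP' u ≠ inP x := nofun

open SimpleGraph

theorem BG.adj_inS_inS {p q : NPoint} (h : NG.Adj p q) : BG.Adj (inS p) (inS q) :=
  let ⟨hpq, L, hL, hp, hq⟩ := h
  ⟨fun h => hpq (Sum.inl_injective h), inS '' L, Or.inl ⟨L, hL, rfl⟩, ⟨p, hp, rfl⟩, ⟨q, hq, rfl⟩⟩

theorem BG.adj_inP_inS (p : NPoint) : BG.Adj (inP p.1.1) (inS p) :=
  ⟨by simp, _, Or.inr ⟨p, rfl⟩, by simp, by simp⟩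

theorem BG.adj_inS_inP' (p : NPoint) : BG.Adj (inS p) (inP' p.1.2) :=
  ⟨by simp, _, Or.inr ⟨p, rfl⟩, by simp, by simp⟩

theorem BG.adj_inP_inP' {x u : Edge} (h : Compat x u) : BG.Adj (inP x) (inP' u) :=
  ⟨by simp, _, Or.inr ⟨⟨(x, u), h⟩, rfl⟩, by simp, by simp⟩

theorem BG.exists_of_adj_inP {x : Edge} {β : BPoint} (h : BG.Adj (inP x) β) :
    ∃ p : NPoint, p.1.1 = x ∧ (β = inS p ∨ β = inP' p.1.2) := by
  obtain ⟨hne, L, ⟨L₀, -, rfl⟩ | ⟨p, rfl⟩, hx, hβ⟩ := h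
  · obtain ⟨_, -, h⟩ := hx
    simp at h
  · simp only [Set.mem_insert_iff, Set.mem_singleton_iff] at hx hβ
    simp only [inP_inj, inP_ne_inS, inP_ne_inP', or_false] at hx
    subst hx
    exact ⟨p, rfl, by simpa [hne.symm] using hβ⟩

theorem BG.exists_of_adj_inP' {u : Edge} {β : BPoint} (h : BG.Adj (inP' u) β) :
    ∃ p : NPoint, p.1.2 = u ∧ (β = inS p ∨ β = inP p.1.1) := by
  obtain ⟨hne, L, ⟨L₀, -, rfl⟩ | ⟨p, rfl⟩, hu, hβ⟩ := h
  · obtain ⟨_, -, h⟩ := hu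
    simp at h
  · simp only [Set.mem_insert_iff, Set.mem_singleton_iff] at hu hβ
    simp only [inP'_inj, inP'_ne_inS, inP'_ne_inP, false_or] at hu
    subst hu
    exact ⟨p, rfl, by simpa [hne.symm, or_comm] using hβ⟩

theorem BG.three_le_edist_inP_inP' {x u : Edge} (hxu : ¬ Compat x u) :
    3 ≤ BG.edist (inP x) (inP' u) := by
  have hnotadj : ¬ BG.Adj (inP x) (inP' u) := fun h => by
    obtain ⟨p, rfl, hp⟩ := BG.exists_of_adj_inP h
    simp only [inP'_ne_inS, inP'_inj, false_or] at hp
    exact hxu (hp ▸ p.2)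
  have hcommon : BG.commonNeighbors (inP x) (inP' u) = ∅ := by
    refine Set.eq_empty_of_forall_notMem fun γ hγ => ?_
    obtain ⟨hxγ, huγ⟩ := (BG.mem_commonNeighbors).1 hγ
    obtain ⟨p, rfl, hp⟩ := BG.exists_of_adj_inP hxγ
    obtain ⟨q, rfl, hq⟩ := BG.exists_of_adj_inP' huγ
    rcases hp with rfl | rfl <;> rcases hq with hq | hq <;> simp at hq
    exact hxu (hq ▸ p.2)
  exact Order.add_one_le_of_lt (two_lt_edist_iff.2
    ⟨by simp, hnotadj, hcommon⟩)

theorem BG.edist_inS_inS_le (p q : NPoint) : BG.edist (inS p) (inS q) ≤ 3 := by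
  obtain ⟨⟨x, u⟩, hxu⟩ := p
  obtain ⟨⟨y, v⟩, hyv⟩ := q
  by_cases hxv : Compat x v
  · exact edist_le_three (.inl (BG.adj_inP_inS _).symm) (.inl (BG.adj_inP_inP' hxv))
      (.inl (BG.adj_inS_inP' ⟨(y, v), hyv⟩).symm)
  by_cases hyu : Compat y u
  · exact edist_le_three (.inl (BG.adj_inS_inP' _)) (.inl (BG.adj_inP_inP' hyu).symm)
      (.inl (BG.adj_inP_inS ⟨(y, v), hyv⟩))
  obtain ⟨r, hr₁, hr₂⟩ := NG.exists_adj_adj hxu hyv hxv hyu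
  exact edist_le_three (.inl (BG.adj_inS_inS hr₁)) (.inl (BG.adj_inS_inS hr₂)) (.inr rfl)

theorem BG.edist_inS_inP_le (p : NPoint) (y : Edge) : BG.edist (inS p) (inP y) ≤ 3 := by
  obtain ⟨s, hps, hsy⟩ := exists_compat_compat p.1.1 y
  exact edist_le_three (.inl (BG.adj_inP_inS p).symm) (.inl (BG.adj_inP_inP' hps))
    (.inl (BG.adj_inP_inP' hsy.symm).symm)

theorem BG.edist_inS_inP'_le (p : NPoint) (v : Edge) : BG.edist (inS p) (inP' v) ≤ 3 := by
  obtain ⟨s, hps, hsv⟩ := exists_compat_compat p.1.2 v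
  exact edist_le_three (.inl (BG.adj_inS_inP' p)) (.inl (BG.adj_inP_inP' hps.symm).symm)
    (.inl (BG.adj_inP_inP' hsv))

theorem BG.edist_inP_inP_le (x y : Edge) : BG.edist (inP x) (inP y) ≤ 3 := by
  obtain ⟨s, hxs, hsy⟩ := exists_compat_compat x y
  exact edist_le_three (.inl (BG.adj_inP_inP' hxs)) (.inl (BG.adj_inP_inP' hsy.symm).symm)
    (.inr rfl)

theorem BG.edist_inP'_inP'_le (u v : Edge) : BG.edist (inP' u) (inP' v) ≤ 3 := by
  obtain ⟨s, hus, hsv⟩ := exists_compat_compat u v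
  exact edist_le_three (.inl (BG.adj_inP_inP' hus.symm).symm) (.inl (BG.adj_inP_inP' hsv))
    (.inr rfl)

theorem BG.edist_inP_inP'_le (x u : Edge) : BG.edist (inP x) (inP' u) ≤ 3 := by
  obtain ⟨s, hxs, hsu⟩ := exists_compat_compat x u
  exact edist_le_three (.inl (BG.adj_inP_inP' hxs)) (.inl (BG.adj_inP_inP' hsu.symm).symm)
    (.inl (BG.adj_inP_inP' (Compat.refl u)))

theorem BG.edist_le_three (α β : BPoint) : BG.edist α β ≤ 3 := by
  rcases α with p | x | u <;> rcases β with q | y | v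
  · exact BG.edist_inS_inS_le p q
  · exact BG.edist_inS_inP_le p y
  · exact BG.edist_inS_inP'_le p v
  · exact BG.edist_comm.trans_le (BG.edist_inS_inP_le q x)
  · exact BG.edist_inP_inP_le x y
  · exact BG.edist_inP_inP'_le x v
  · exact BG.edist_comm.trans_le (BG.edist_inS_inP'_le q u)
  · exact BG.edist_comm.trans_le (BG.edist_inP_inP'_le y u)
  · exact BG.edist_inP'_inP'_le u v

theorem exists_not_compat : ∃ x u : Edge, ¬ Compat x u := by decide

/-- The collinearity graph of 𝕊 is connected and has diameter 3. -/
theorem statement14 : BG.Connected ∧ BG.diam = 3 := by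
  obtain ⟨x, u, hxu⟩ := exists_not_compat
  have hediam : BG.ediam = 3 :=
    le_antisymm (ediam_le_of_edist_le BG.edist_le_three)
      ((BG.three_le_edist_inP_inP' hxu).trans edist_le_ediam)
  have : Nonempty BPoint := ⟨inP x⟩
  refine ⟨connected_of_ediam_ne_top (by simp [hediam]), ?_⟩
  rw [diam, hediam]
  rfl
end
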